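/- arXiv:math/0205023 — 2 statements merged into one kernel-verified Lean document; each statement's English description precedes it below -/
import Mathlib

section
/- Let k ∈ ℤ and R_k = ℤ[s,f]/(f², s⁴ + k·s³f). If α, β are integers with α ≠ 0 and (α·s + β·f)⁴ = 0 in R_k, then 4β = αk. -/
open MvPolynomial

noncomputable def sP : MvPolynomial (Fin 2) ℤ := X 0
noncomputable def fP : MvPolynomial (Fin 2) ℤ := X 1

/-- The model cohomology ring `ℤ[s,f]/(f², s⁴ + k·s³f)`. -/
abbrev Rk (k : ℤ) : Type := MvPolynomial (Fin 2) ℤ ⧸ Ideal.span {fP ^ 2, sP ^ 4 + C k * sP ^ 3 * fP}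

noncomputable def sQ (k : ℤ) : Rk k := Ideal.Quotient.mk _ sP
noncomputable def fQ (k : ℤ) : Rk k := Ideal.Quotient.mk _ fP

-- auxiliary monomial exponents
noncomputable def m1 : Fin 2 →₀ ℕ := Finsupp.single 0 3 + Finsupp.single 1 1
noncomputable def m2 : Fin 2 →₀ ℕ := Finsupp.single 0 4
noncomputable def m3 : Fin 2 →₀ ℕ := Finsupp.single 0 2 + Finsupp.single 1 2
noncomputable def m4 : Fin 2 →₀ ℕ := Finsupp.single 0 1 + Finsupp.single 1 3
noncomputable def m5 : Fin 2 →₀ ℕ := Finsupp.single 1 4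
noncomputable def m6 : Fin 2 →₀ ℕ := Finsupp.single 1 2

lemma m1_apply_0 : m1 0 = 3 := by simp [m1, Finsupp.single_apply]
lemma m1_apply_1 : m1 1 = 1 := by simp [m1, Finsupp.single_apply]
lemma m2_apply_0 : m2 0 = 4 := by simp [m2]
lemma m2_apply_1 : m2 1 = 0 := by simp [m2, Finsupp.single_apply]
lemma m3_apply_1 : m3 1 = 2 := by simp [m3, Finsupp.single_apply]
lemma m4_apply_0 : m4 0 = 1 := by simp [m4, Finsupp.single_apply]
lemma m5_apply_0 : m5 0 = 0 := by simp [m5, Finsupp.single_apply]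
lemma m5_apply_1 : m5 1 = 4 := by simp [m5, Finsupp.single_apply]

lemma ne_of_apply {a b : Fin 2 →₀ ℕ} (i : Fin 2) (h : a i ≠ b i) : a ≠ b :=
  fun hab => h (by rw [hab])

lemma fP_sq : fP ^ 2 = monomial m6 1 := by simp [fP, m6, X_pow_eq_monomial]

lemma sP_four : sP ^ 4 = monomial m2 1 := by simp [sP, m2, X_pow_eq_monomial]

lemma sP3fP : sP ^ 3 * fP = monomial m1 1 := by
  rw [sP, fP, X_pow_eq_monomial, X, m1, monomial_mul, mul_one]

lemma key_expand (α β : ℤ) :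
    ((C α * sP + C β * fP) ^ 4 : MvPolynomial (Fin 2) ℤ)
      = monomial m2 (α ^ 4) + monomial m1 (4 * α ^ 3 * β) + monomial m3 (6 * α ^ 2 * β ^ 2)
        + monomial m4 (4 * α * β ^ 3) + monomial m5 (β ^ 4) := by
  have h2 : (monomial m2 (α ^ 4) : MvPolynomial (Fin 2) ℤ) = C (α ^ 4) * sP ^ 4 := by
    rw [sP, X_pow_eq_monomial, m2, C_mul_monomial, mul_one]
  have h1 : (monomial m1 (4 * α ^ 3 * β) : MvPolynomial (Fin 2) ℤ)
      = C (4 * α ^ 3 * β) * (sP ^ 3 * fP) := by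
    rw [sP3fP, C_mul_monomial, mul_one]
  have h3 : (monomial m3 (6 * α ^ 2 * β ^ 2) : MvPolynomial (Fin 2) ℤ)
      = C (6 * α ^ 2 * β ^ 2) * (sP ^ 2 * fP ^ 2) := by
    rw [sP, fP, X_pow_eq_monomial, X_pow_eq_monomial, m3, monomial_mul, mul_one,
      C_mul_monomial, mul_one]
  have h4 : (monomial m4 (4 * α * β ^ 3) : MvPolynomial (Fin 2) ℤ)
      = C (4 * α * β ^ 3) * (sP * fP ^ 3) := by
    rw [sP, fP, X, X_pow_eq_monomial, m4, monomial_mul, mul_one, C_mul_monomial, mul_one]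
  have h5 : (monomial m5 (β ^ 4) : MvPolynomial (Fin 2) ℤ) = C (β ^ 4) * fP ^ 4 := by
    rw [fP, X_pow_eq_monomial, m5, C_mul_monomial, mul_one]
  rw [h1, h2, h3, h4, h5]
  simp only [C_mul, C_pow, map_ofNat]
  ring

theorem stmt11 (k α β : ℤ) (hα : α ≠ 0)
    (h : (α • sQ k + β • fQ k) ^ 4 = 0) :
    4 * β = α * k := by
  classical
  set I : Ideal (MvPolynomial (Fin 2) ℤ) :=
    Ideal.span {fP ^ 2, sP ^ 4 + C k * sP ^ 3 * fP} with hI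
  have smul_mk : ∀ (n : ℤ) (p : MvPolynomial (Fin 2) ℤ),
      n • (Ideal.Quotient.mk I p) = Ideal.Quotient.mk I (C n * p) := by
    intro n p
    rw [zsmul_eq_mul, map_mul, eq_intCast (C : ℤ →+* MvPolynomial (Fin 2) ℤ) n, map_intCast]
  have hmk : (α • sQ k + β • fQ k) ^ 4
      = Ideal.Quotient.mk I ((C α * sP + C β * fP) ^ 4) := by
    rw [map_pow, map_add, sQ, fQ, smul_mk, smul_mk]
  rw [hmk, Ideal.Quotient.eq_zero_iff_mem, hI, Ideal.mem_span_pair] at h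
  obtain ⟨u, v, huv⟩ := h
  -- coefficient of m1 and m2 in both sides
  have c1 := congrArg (coeff m1) huv
  have c2 := congrArg (coeff m2) huv
  rw [key_expand] at c1 c2
  have hufp1 : coeff m1 (u * fP ^ 2) = 0 := by
    rw [fP_sq, coeff_mul_monomial', if_neg]
    rw [m6, Finsupp.single_le_iff, m1_apply_1]; omega
  have hufp2 : coeff m2 (u * fP ^ 2) = 0 := by
    rw [fP_sq, coeff_mul_monomial', if_neg]
    rw [m6, Finsupp.single_le_iff, m2_apply_1]; omega
  have hvdist : v * (sP ^ 4 + C k * sP ^ 3 * fP)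
      = v * monomial m2 1 + C k * (v * monomial m1 1) := by
    rw [← sP_four, ← sP3fP]; ring
  have hvs1 : coeff m1 (v * monomial m2 1) = 0 := by
    rw [coeff_mul_monomial', if_neg]
    intro hle
    have := hle 0
    rw [m2_apply_0, m1_apply_0] at this; omega
  have hvs2 : coeff m2 (v * monomial m2 1) = coeff 0 v := by
    rw [coeff_mul_monomial', if_pos le_rfl, tsub_self, mul_one]
  have hvm1 : coeff m1 (v * monomial m1 1) = coeff 0 v := by
    rw [coeff_mul_monomial', if_pos le_rfl, tsub_self, mul_one]
  have hvm2 : coeff m2 (v * monomial m1 1) = 0 := by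
    rw [coeff_mul_monomial', if_neg]
    intro hle
    have := hle 1
    rw [m1_apply_1, m2_apply_1] at this; omega
  -- coefficients of the RHS monomial sum
  have hm1ne2 : m2 ≠ m1 := ne_of_apply 0 (by rw [m1_apply_0, m2_apply_0]; omega)
  have hm3ne1 : m3 ≠ m1 := ne_of_apply 1 (by rw [m1_apply_1, m3_apply_1]; omega)
  have hm4ne1 : m4 ≠ m1 := ne_of_apply 0 (by rw [m1_apply_0, m4_apply_0]; omega)
  have hm5ne1 : m5 ≠ m1 := ne_of_apply 1 (by rw [m1_apply_1, m5_apply_1]; omega)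
  have hm1ne2' : m1 ≠ m2 := fun h => hm1ne2 h.symm
  have hm3ne2 : m3 ≠ m2 := ne_of_apply 1 (by rw [m2_apply_1, m3_apply_1]; omega)
  have hm4ne2 : m4 ≠ m2 := ne_of_apply 0 (by rw [m2_apply_0, m4_apply_0]; omega)
  have hm5ne2 : m5 ≠ m2 := ne_of_apply 0 (by rw [m2_apply_0, m5_apply_0]; omega)
  have hc1rhs : coeff m1 ((monomial m2) (α ^ 4) + (monomial m1) (4 * α ^ 3 * β)
      + (monomial m3) (6 * α ^ 2 * β ^ 2) + (monomial m4) (4 * α * β ^ 3)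
      + (monomial m5) (β ^ 4)) = 4 * α ^ 3 * β := by
    simp only [coeff_add, coeff_monomial]
    rw [if_neg hm1ne2, if_neg hm3ne1, if_neg hm4ne1, if_neg hm5ne1]; norm_num
  have hc2rhs : coeff m2 ((monomial m2) (α ^ 4) + (monomial m1) (4 * α ^ 3 * β)
      + (monomial m3) (6 * α ^ 2 * β ^ 2) + (monomial m4) (4 * α * β ^ 3)
      + (monomial m5) (β ^ 4)) = α ^ 4 := by
    simp only [coeff_add, coeff_monomial]
    rw [if_neg hm1ne2', if_neg hm3ne2, if_neg hm4ne2, if_neg hm5ne2]; norm_num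
  rw [hc1rhs, coeff_add, hufp1, hvdist, coeff_add, coeff_C_mul, hvs1, hvm1] at c1
  rw [hc2rhs, coeff_add, hufp2, hvdist, coeff_add, coeff_C_mul, hvs2, hvm2] at c2
  -- c1 : 0 + (0 + k * coeff 0 v) = 4 * α ^ 3 * β
  -- c2 : 0 + (coeff 0 v + k * 0) = α ^ 4
  have key : α ^ 3 * (4 * β) = α ^ 3 * (α * k) := by
    have hv : coeff 0 v = α ^ 4 := by linarith
    rw [hv] at c1
    ring_nf
    ring_nf at c1
    linarith [c1]
  exact mul_left_cancel₀ (pow_ne_zero 3 hα) key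
end

section
/- Let k₁, k₂, g₁, g₂ be integers. There exists an isomorphism of graded rings between R_{k₁} = ℤ[s₁,f₁]/(f₁², s₁⁴ + k₁·s₁³f₁) and R_{k₂} = ℤ[s₂,f₂]/(f₂², s₂⁴ + k₂·s₂³f₂) sending the degree-2 part isomorphically to the degree-2 part if and only if k₁ ≡ k₂ (mod 4) or k₁ ≡ −k₂ (mod 4); concretely, there exist ε, η ∈ {±1} and l ∈ ℤ such that the assignment s₁ ↦ ε·s₂ + l·f₂, f₁ ↦ η·f₂ preserves both relations if and only if k₁ ≡ ±k₂ (mod 4). -/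
set_option maxHeartbeats 2000000
set_option synthInstance.maxHeartbeats 400000

open MvPolynomial

/-! ### Auxiliary lemmas -/

noncomputable def Emap : MvPolynomial (Fin 2) ℤ →ₐ[ℤ] DualNumber (Polynomial ℤ) :=
  aeval ![TrivSqZeroExt.inl Polynomial.X, DualNumber.eps]

set_option maxHeartbeats 1000000 in
lemma mem_key (k a b : ℤ)
    (h : C a * sP^4 + C b * (sP^3*fP) ∈ Ideal.span {fP^2, sP^4 + C k * sP^3 * fP}) :
    b = k * a := by
  rw [Ideal.mem_span_pair] at h
  obtain ⟨A, B, hAB⟩ := h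
  have h2 := congrArg Emap hAB.symm
  simp only [map_add, map_mul, map_pow, Emap, fP, sP, aeval_X, aeval_C, Matrix.cons_val_zero,
    Matrix.cons_val_one, Matrix.head_cons] at h2
  have hfst := congrArg TrivSqZeroExt.fst h2
  have hsnd := congrArg TrivSqZeroExt.snd h2
  simp only [TrivSqZeroExt.fst_add, TrivSqZeroExt.fst_mul, TrivSqZeroExt.fst_pow,
    TrivSqZeroExt.snd_add, TrivSqZeroExt.snd_mul, TrivSqZeroExt.snd_pow,
    TrivSqZeroExt.fst_inl, TrivSqZeroExt.snd_inl, DualNumber.fst_eps, DualNumber.snd_eps,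
    algebraMap_int_eq, map_intCast, TrivSqZeroExt.fst_intCast, TrivSqZeroExt.snd_intCast,
    smul_zero, zero_smul, mul_zero, zero_mul, add_zero, zero_add, MulOpposite.op_zero,
    smul_eq_mul, mul_one, one_mul, zero_pow, MulOpposite.op_smul, MulOpposite.smul_eq_mul_unop,
    MulOpposite.unop_op, ne_eq, OfNat.ofNat_ne_zero, not_false_eq_true] at hfst hsnd
  simp only [eq_intCast, TrivSqZeroExt.fst_intCast, TrivSqZeroExt.snd_intCast,
    show Nat.pred 2 = 1 from rfl, pow_one, mul_zero, smul_zero, zero_mul, zero_add,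
    add_zero] at hfst hsnd
  have hB0 : TrivSqZeroExt.fst ((MvPolynomial.aeval
      ![TrivSqZeroExt.inl Polynomial.X, DualNumber.eps]) B) = ((a : ℤ) : Polynomial ℤ) :=
    (mul_right_cancel₀ (pow_ne_zero _ Polynomial.X_ne_zero) hfst).symm
  rw [hB0] at hsnd
  have h3 := congrArg (fun p => Polynomial.coeff p 3) hsnd
  simp only [← Polynomial.C_eq_intCast, Polynomial.coeff_add, Polynomial.coeff_C_mul,
    Polynomial.coeff_mul_X_pow', Polynomial.coeff_X_pow] at h3
  norm_num at h3
  linarith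

lemma expand4 {R : Type*} [CommRing R] (s f a b c d : R) (ha : a^2 = 1) (hf : f^2 = 0) :
    (a*s + b*f)^4 + c*((a*s + b*f)^3*(d*f)) = s^4 + (4*a*b + a*c*d)*(s^3*f) := by
  linear_combination ((a^2+1)*s^4 + 4*a*b*s^3*f + a*c*d*s^3*f) * ha +
    (6*a^2*b^2*s^2 + 4*a*b^3*s*f + b^4*f^2 + c*d*(3*a^2*b*s^2 + 3*a*b^2*s*f + b^3*f^2)) * hf

lemma fQ_sq (k : ℤ) : fQ k ^ 2 = 0 := by
  rw [fQ, ← map_pow, Ideal.Quotient.eq_zero_iff_mem]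
  exact Ideal.subset_span (Set.mem_insert _ _)

lemma sQ_rel (k : ℤ) : sQ k ^ 4 + (k : Rk k) * (sQ k ^ 3 * fQ k) = 0 := by
  have h : (Ideal.Quotient.mk _) (sP ^ 4 + C k * sP ^ 3 * fP) = (0 : Rk k) := by
    rw [Ideal.Quotient.eq_zero_iff_mem]
    exact Ideal.subset_span (Set.mem_insert_of_mem _ rfl)
  rw [map_add, map_mul, map_mul, map_pow, map_pow, hom_C] at h
  rw [sQ, fQ]; linear_combination h

noncomputable def Fhom (k k' ε η l : ℤ) (hε : ε^2 = 1) (hcond : 4*ε*l + ε*η*k = k') :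
    Rk k →+* Rk k' :=
  Ideal.Quotient.lift _
    ((aeval ![(ε : Rk k') * sQ k' + (l : Rk k') * fQ k', (η : Rk k') * fQ k']).toRingHom :
      MvPolynomial (Fin 2) ℤ →+* Rk k') (by
    intro p hp
    simp only [AlgHom.toRingHom_eq_coe, RingHom.coe_coe]
    refine Submodule.span_induction ?_ ?_ ?_ ?_ hp
    · rintro x (rfl | rfl)
      · simp only [fP, map_pow, aeval_X, Matrix.cons_val_one, Matrix.head_cons]
        rw [Matrix.cons_val_zero, mul_pow, fQ_sq, mul_zero]
      · simp only [map_add, map_mul, map_pow, aeval_X, aeval_C, sP, fP,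
          Matrix.cons_val_zero, Matrix.cons_val_one, Matrix.head_cons,
          algebraMap_int_eq, eq_intCast, map_intCast]
        have h1 := expand4 (sQ k') (fQ k') (ε : Rk k') (l : Rk k') (k : Rk k') (η : Rk k')
          (by rw [← Int.cast_pow, hε, Int.cast_one]) (fQ_sq k')
        have h2 := sQ_rel k'
        have hc : ((4*ε*l + ε*η*k : ℤ) : Rk k') = (k' : Rk k') := by
          exact_mod_cast congrArg _ hcond
        push_cast at hc
        linear_combination h1 + h2 + (sQ k' ^ 3 * fQ k') * hc
    · simp
    · intro x y _ _ hx hy; rw [map_add, hx, hy, add_zero]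
    · intro x y _ hy; rw [smul_eq_mul, map_mul, hy, mul_zero])

lemma Fhom_s (k k' ε η l : ℤ) (hε : ε^2 = 1) (hcond : 4*ε*l + ε*η*k = k') :
    Fhom k k' ε η l hε hcond (sQ k) = (ε : Rk k') * sQ k' + (l : Rk k') * fQ k' := by
  unfold Fhom
  exact (Ideal.Quotient.lift_mk _ _ _).trans (by simp [sP])

lemma Fhom_f (k k' ε η l : ℤ) (hε : ε^2 = 1) (hcond : 4*ε*l + ε*η*k = k') :
    Fhom k k' ε η l hε hcond (fQ k) = (η : Rk k') * fQ k' := by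
  unfold Fhom
  exact (Ideal.Quotient.lift_mk _ _ _).trans (by simp [fP])

lemma exists_equiv (k k' ε η l : ℤ) (hε : ε = 1 ∨ ε = -1) (hη : η = 1 ∨ η = -1)
    (hcond : 4*ε*l + ε*η*k = k') :
    ∃ e : Rk k ≃+* Rk k', e (sQ k) = ε • sQ k' + l • fQ k' ∧ e (fQ k) = η • fQ k' := by
  have hε2 : ε^2 = 1 := by rcases hε with rfl|rfl <;> norm_num
  have hη2 : η^2 = 1 := by rcases hη with rfl|rfl <;> norm_num
  have hcond2 : 4*ε*(-(ε*l*η)) + ε*η*k' = k := by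
    rcases hε with rfl|rfl <;> rcases hη with rfl|rfl <;> omega
  have hεc : ((ε : ℤ) : Rk k)^2 = 1 := by rw [← Int.cast_pow, hε2, Int.cast_one]
  have hηc : ((η : ℤ) : Rk k)^2 = 1 := by rw [← Int.cast_pow, hη2, Int.cast_one]
  have hεc' : ((ε : ℤ) : Rk k')^2 = 1 := by rw [← Int.cast_pow, hε2, Int.cast_one]
  have hηc' : ((η : ℤ) : Rk k')^2 = 1 := by rw [← Int.cast_pow, hη2, Int.cast_one]
  refine ⟨RingEquiv.ofRingHom (Fhom k k' ε η l hε2 hcond)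
      (Fhom k' k ε η (-(ε*l*η)) hε2 hcond2) ?_ ?_, ?_, ?_⟩
  pick_goal 2
  · -- G.comp F = id
    refine Ideal.Quotient.ringHom_ext (MvPolynomial.ringHom_ext (fun c => ?_) (fun i => ?_))
    · simp only [RingHom.comp_apply, RingHom.id_apply]
      rw [hom_C (Ideal.Quotient.mk _), map_intCast, map_intCast]
    · fin_cases i
      · show (Fhom k' k ε η (-(ε*l*η)) hε2 hcond2) ((Fhom k k' ε η l hε2 hcond) (sQ k)) = sQ k
        rw [Fhom_s, map_add, map_mul, map_mul, map_intCast, map_intCast, Fhom_s, Fhom_f]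
        push_cast
        linear_combination (sQ k - (l : Rk k) * (η : Rk k) * fQ k) * hεc
      · show (Fhom k' k ε η (-(ε*l*η)) hε2 hcond2) ((Fhom k k' ε η l hε2 hcond) (fQ k)) = fQ k
        rw [Fhom_f, map_mul, map_intCast, Fhom_f]
        linear_combination (fQ k) * hηc
  · -- F.comp G = id
    refine Ideal.Quotient.ringHom_ext (MvPolynomial.ringHom_ext (fun c => ?_) (fun i => ?_))
    · simp only [RingHom.comp_apply, RingHom.id_apply]
      rw [hom_C (Ideal.Quotient.mk _), map_intCast, map_intCast]
    · fin_cases i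
      · show (Fhom k k' ε η l hε2 hcond) ((Fhom k' k ε η (-(ε*l*η)) hε2 hcond2) (sQ k')) = sQ k'
        rw [Fhom_s, map_add, map_mul, map_mul, map_intCast, map_intCast, Fhom_s, Fhom_f]
        push_cast
        linear_combination (sQ k') * hεc' - ((ε:Rk k')*(l:Rk k')*fQ k') * hηc'
      · show (Fhom k k' ε η l hε2 hcond) ((Fhom k' k ε η (-(ε*l*η)) hε2 hcond2) (fQ k')) = fQ k'
        rw [Fhom_f, map_mul, map_intCast, Fhom_f]
        linear_combination (fQ k') * hηc'
  · show (Fhom k k' ε η l hε2 hcond) (sQ k) = _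
    rw [Fhom_s, zsmul_eq_mul, zsmul_eq_mul]
  · show (Fhom k k' ε η l hε2 hcond) (fQ k) = _
    rw [Fhom_f, zsmul_eq_mul]

theorem stmt14 (k₁ k₂ g₁ g₂ : ℤ) :
    (∃ (e : Rk k₁ ≃+* Rk k₂) (ε η l : ℤ), (ε = 1 ∨ ε = -1) ∧ (η = 1 ∨ η = -1) ∧
        e (sQ k₁) = ε • sQ k₂ + l • fQ k₂ ∧ e (fQ k₁) = η • fQ k₂)
      ↔ (k₁ ≡ k₂ [ZMOD 4] ∨ k₁ ≡ -k₂ [ZMOD 4]) := by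
  constructor
  · rintro ⟨e, ε, η, l, hε, hη, hs, hf⟩
    have hε2 : ε^2 = 1 := by rcases hε with rfl|rfl <;> norm_num
    rw [zsmul_eq_mul, zsmul_eq_mul] at hs
    rw [zsmul_eq_mul] at hf
    have hs' : (e : Rk k₁ →+* Rk k₂) (sQ k₁) = (ε : Rk k₂) * sQ k₂ + (l : Rk k₂) * fQ k₂ := hs
    have hf' : (e : Rk k₁ →+* Rk k₂) (fQ k₁) = (η : Rk k₂) * fQ k₂ := hf
    have h0 : (e : Rk k₁ →+* Rk k₂) ((sQ k₁)^4 + (k₁ : Rk k₁)*(sQ k₁^3 * fQ k₁)) = 0 := by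
      rw [sQ_rel, map_zero]
    rw [map_add, map_mul, map_mul, map_pow, map_pow, map_intCast, hs', hf'] at h0
    have h1 := expand4 (sQ k₂) (fQ k₂) (ε : Rk k₂) (l : Rk k₂) (k₁ : Rk k₂) (η : Rk k₂)
      (by rw [← Int.cast_pow, hε2, Int.cast_one]) (fQ_sq k₂)
    have h2 := sQ_rel k₂
    have h3 : ((4*ε*l + ε*η*k₁ - k₂ : ℤ) : Rk k₂) * (sQ k₂^3 * fQ k₂) = 0 := by
      push_cast
      linear_combination h0 - h1 - h2
    have h4 : (Ideal.Quotient.mk _) (C (4*ε*l + ε*η*k₁ - k₂) * (sP^3 * fP)) = (0 : Rk k₂) := by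
      rw [map_mul, map_mul, map_pow, hom_C]
      exact h3
    rw [Ideal.Quotient.eq_zero_iff_mem] at h4
    have h5 : (4*ε*l + ε*η*k₁ - k₂) = k₂ * 0 := by
      apply mem_key
      simpa using h4
    rw [mul_zero] at h5
    rcases hε with rfl|rfl <;> rcases hη with rfl|rfl
    · left; rw [Int.ModEq]; omega
    · right; rw [Int.ModEq]; omega
    · right; rw [Int.ModEq]; omega
    · left; rw [Int.ModEq]; omega
  · rintro (h | h)
    · obtain ⟨m, hm⟩ := h.dvd
      obtain ⟨e, hs, hf⟩ := exists_equiv k₁ k₂ 1 1 m (Or.inl rfl) (Or.inl rfl) (by omega)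
      exact ⟨e, 1, 1, m, Or.inl rfl, Or.inl rfl, hs, hf⟩
    · obtain ⟨m, hm⟩ := h.dvd
      obtain ⟨e, hs, hf⟩ := exists_equiv k₁ k₂ 1 (-1) (-m) (Or.inl rfl) (Or.inr rfl) (by omega)
      exact ⟨e, 1, -1, -m, Or.inl rfl, Or.inr rfl, hs, hf⟩
end
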